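/- Let Y be a continuous local martingale in ℝ null at zero with C_t = [Y,Y]_t. If C_t = ∫₀ᵗ c_s ds with ∫₀¹ |c_s|³ ds < ∞ a.s., then the sequence of random variables {n² N₁ⁿ(C)}_{n≥1}, where N_t^n(C) = ∫₀ᵗ (C_s − C_{n(s)})² dC_s, satisfies sup_n n² N₁ⁿ(C) < ∞ almost surely. -/

import Mathlib

open MeasureTheory ProbabilityTheory Filter

/-- `nfl n s = ⌊n s⌋ / n`, the left endpoint of the partition interval containing `s`. -/
noncomputable def nfl (n : ℕ) (s : ℝ) : ℝ := (⌊(n : ℝ) * s⌋ : ℝ) / n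

/-- `M` is a continuous local martingale with respect to the filtration `ℱ` under `μ`:
it has continuous paths and there is a localizing sequence of stopping times `τ k ↑ ∞`
such that each stopped process `M^{τ k}` is a martingale. -/
def IsContLocMart {Ω : Type*} {mΩ : MeasurableSpace Ω} (ℱ : MeasureTheory.Filtration ℝ mΩ)
    (μ : MeasureTheory.Measure Ω) (M : ℝ → Ω → ℝ) : Prop :=
  (∀ ω, Continuous fun t => M t ω) ∧
    ∃ τ : ℕ → Ω → ℝ, (∀ k, MeasureTheory.IsStoppingTime ℱ (fun ω => ((τ k ω : ℝ) : WithTop ℝ))) ∧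
      (∀ ω, Filter.Tendsto (fun k => τ k ω) Filter.atTop Filter.atTop) ∧
      ∀ k, MeasureTheory.Martingale (fun t ω => M (min t (τ k ω)) ω) ℱ μ

/-- `Q` is the quadratic variation process `[M,M]` of the continuous local martingale `M`:
`Q` is continuous, nondecreasing, starts at `0`, is adapted, and `M² − Q` is a continuous
local martingale. -/
def IsQuadraticVariation {Ω : Type*} {mΩ : MeasurableSpace Ω} (ℱ : MeasureTheory.Filtration ℝ mΩ)
    (μ : MeasureTheory.Measure Ω) (M Q : ℝ → Ω → ℝ) : Prop :=
  (∀ ω, Continuous fun t => Q t ω) ∧ (∀ ω, Monotone fun t => Q t ω) ∧ (∀ ω, Q 0 ω = 0) ∧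
    MeasureTheory.Adapted ℱ (fun t ω => Q t ω) ∧
    IsContLocMart ℱ μ (fun t ω => M t ω * M t ω - Q t ω)

/-!
On a partition interval `[k/n, (k+1)/n]` one has `C_s - C_{n(s)} = ∫_{k/n}^s c`, so the integrand
`(C_s - C_{n(s)})² c_s` is at most `(∫_{k/n}^{(k+1)/n} |c|)² |c_s|`. Hence that piece of `N₁ⁿ(C)` is
at most `(∫_{k/n}^{(k+1)/n} |c|)³ ≤ n⁻² ∫_{k/n}^{(k+1)/n} |c|³` by Jensen's inequality, and summing
over `k` gives the pathwise bound `n² N₁ⁿ(C) ≤ ∫₀¹ |c_s|³ ds`.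
-/

open Set

theorem integral_abs_pow_succ_le {f : ℝ → ℝ} {a b : ℝ} (hab : a ≤ b) (p : ℕ)
    (hf : IntervalIntegrable f volume a b)
    (hfp : IntervalIntegrable (fun s => |f s| ^ (p + 1)) volume a b) :
    (∫ s in a..b, |f s|) ^ (p + 1) ≤ (b - a) ^ p * ∫ s in a..b, |f s| ^ (p + 1) := by
  rcases hab.eq_or_lt with rfl | hlt
  · simp
  have hL : 0 < b - a := sub_pos.mpr hlt
  have jensen : (⨍ s in a..b, |f s|) ^ (p + 1) ≤ ⨍ s in a..b, |f s| ^ (p + 1) :=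
    (convexOn_pow (p + 1)).map_set_average_le (continuous_pow _).continuousOn isClosed_Ici
      (by simp [Real.volume_uIoc, hL.ne']) (by simp [Real.volume_uIoc])
      (Filter.Eventually.of_forall fun s => abs_nonneg (f s)) hf.def'.abs hfp.def'
  rw [interval_average_eq_div, interval_average_eq_div, div_pow, div_le_div_iff₀ (by positivity) hL,
    pow_succ (b - a) p, ← mul_assoc, mul_comm _ ((b - a) ^ p)] at jensen
  exact le_of_mul_le_mul_right jensen hL

theorem IntervalIntegrable.sq_primitive_mul {f : ℝ → ℝ} {a b : ℝ}
    (hf : IntervalIntegrable f volume a b) :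
    IntervalIntegrable (fun s => (∫ u in a..s, f u) ^ 2 * f s) volume a b :=
  hf.continuousOn_mul ((intervalIntegral.continuousOn_primitive_interval' hf left_mem_uIcc).pow 2)

theorem integral_sq_primitive_mul_le {f : ℝ → ℝ} {a b : ℝ} (hab : a ≤ b)
    (hf : IntervalIntegrable f volume a b) :
    ∫ s in a..b, (∫ u in a..s, f u) ^ 2 * f s ≤ (∫ s in a..b, |f s|) ^ 3 := by
  set B := ∫ s in a..b, |f s|
  have hbound : ∀ s ∈ Icc a b, |∫ u in a..s, f u| ≤ B := fun s hs =>
    calc |∫ u in a..s, f u| ≤ ∫ u in a..s, |f u| :=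
          intervalIntegral.abs_integral_le_integral_abs hs.1
      _ ≤ B := intervalIntegral.integral_mono_interval le_rfl hs.1 hs.2
          (Filter.Eventually.of_forall fun u => abs_nonneg (f u)) hf.abs
  calc ∫ s in a..b, (∫ u in a..s, f u) ^ 2 * f s
      ≤ ∫ s in a..b, B ^ 2 * |f s| := by
        refine intervalIntegral.integral_mono_on hab hf.sq_primitive_mul
          (hf.abs.const_mul _) fun s hs => ?_
        calc (∫ u in a..s, f u) ^ 2 * f s ≤ (∫ u in a..s, f u) ^ 2 * |f s| :=
              mul_le_mul_of_nonneg_left (le_abs_self _) (sq_nonneg _)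
          _ ≤ B ^ 2 * |f s| :=
              mul_le_mul_of_nonneg_right (sq_le_sq.mpr ((hbound s hs).trans (le_abs_self B)))
                (abs_nonneg _)
    _ = B ^ 3 := by rw [intervalIntegral.integral_const_mul]; ring

theorem nfl_eq_of_mem_Ico {n k : ℕ} (hn : 0 < n) {s : ℝ}
    (hs : s ∈ Ico ((k : ℝ) / n) ((k + 1) / n)) :
    nfl n s = k / n := by
  have hn' : (0 : ℝ) < n := Nat.cast_pos.mpr hn
  rw [mem_Ico, div_le_iff₀ hn', lt_div_iff₀ hn'] at hs
  have : ⌊(n : ℝ) * s⌋ = k := Int.floor_eq_iff.mpr ⟨by push_cast; linarith, by push_cast; linarith⟩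
  rw [nfl, this, Int.cast_natCast]

theorem nfl_mem_Icc {n : ℕ} {s : ℝ} (hs : s ∈ Icc (0 : ℝ) 1) : nfl n s ∈ Icc (0 : ℝ) 1 := by
  rcases n.eq_zero_or_pos with rfl | hn
  · simp [nfl]
  have hn' : (0 : ℝ) < n := Nat.cast_pos.mpr hn
  have hfloor : (0 : ℝ) ≤ ⌊(n : ℝ) * s⌋ :=
    Int.cast_nonneg_iff.mpr (Int.floor_nonneg.mpr (by nlinarith [hs.1]))
  refine ⟨div_nonneg hfloor hn'.le, ?_⟩
  rw [nfl, div_le_one hn']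
  nlinarith [Int.floor_le ((n : ℝ) * s), hs.2]

section Partition

variable {C c : ℝ → ℝ} {n k : ℕ}

theorem eqOn_sq_sub_nfl_mul (hCc : ∀ t, C t = ∫ s in (0 : ℝ)..t, c s)
    (hc : IntervalIntegrable c volume 0 1) (hn : 0 < n) (hk : k < n) :
    EqOn (fun s => (C s - C (nfl n s)) ^ 2 * c s)
      (fun s => (∫ u in (k : ℝ) / n..s, c u) ^ 2 * c s) (Ioo ((k : ℝ) / n) ((k + 1) / n)) := by
  intro s hs
  have hn' : (0 : ℝ) < n := Nat.cast_pos.mpr hn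
  have hk1 : ((k : ℝ) + 1) / n ≤ 1 := by
    rw [div_le_one hn']; exact_mod_cast hk
  have hk0 : 0 ≤ (k : ℝ) / n := by positivity
  have hint : ∀ t ∈ Icc (0 : ℝ) 1, IntervalIntegrable c volume 0 t := fun t ht =>
    hc.mono_set (uIcc_subset_uIcc left_mem_uIcc (by rwa [uIcc_of_le zero_le_one]))
  dsimp only
  rw [nfl_eq_of_mem_Ico hn (Ioo_subset_Ico_self hs), hCc, hCc,
    intervalIntegral.integral_interval_sub_left
      (hint s ⟨hk0.trans hs.1.le, hs.2.le.trans hk1⟩)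
      (hint _ ⟨hk0, (hs.1.trans hs.2).le.trans hk1⟩)]

theorem integral_sq_sub_nfl_mul_le (hCc : ∀ t, C t = ∫ s in (0 : ℝ)..t, c s)
    (hc : IntervalIntegrable c volume 0 1)
    (hc3 : IntervalIntegrable (fun s => |c s| ^ 3) volume 0 1) (hn : 0 < n) :
    ∫ s in (0 : ℝ)..1, (C s - C (nfl n s)) ^ 2 * c s ≤
      (1 / (n : ℝ)) ^ 2 * ∫ s in (0 : ℝ)..1, |c s| ^ 3 := by
  have hn' : (0 : ℝ) < n := Nat.cast_pos.mpr hn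
  set a : ℕ → ℝ := fun k => (k : ℝ) / n with ha
  have hmono : ∀ k, a k ≤ a (k + 1) := fun k => by
    simp only [ha]; gcongr; simp
  have hsub : ∀ k < n, uIcc (a k) (a (k + 1)) ⊆ uIcc 0 1 := fun k hk => by
    rw [uIcc_of_le (hmono k), uIcc_of_le zero_le_one]
    refine Icc_subset_Icc (by positivity) ?_
    rw [ha, div_le_one hn']; exact_mod_cast hk
  have hpiece : ∀ k < n, EqOn (fun s => (C s - C (nfl n s)) ^ 2 * c s)
      (fun s => (∫ u in a k..s, c u) ^ 2 * c s) (Ioo (a k) (a (k + 1))) := fun k hk => by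
    simpa [ha] using eqOn_sq_sub_nfl_mul hCc hc hn hk
  have hint : ∀ k < n, IntervalIntegrable (fun s => (C s - C (nfl n s)) ^ 2 * c s) volume
      (a k) (a (k + 1)) := fun k hk =>
    ((hc.mono_set (hsub k hk)).sq_primitive_mul).congr_uIoo
      (uIoo_of_le (hmono k) ▸ (hpiece k hk).symm)
  have hbound : ∀ k < n, ∫ s in a k..a (k + 1), (C s - C (nfl n s)) ^ 2 * c s ≤
      (1 / (n : ℝ)) ^ 2 * ∫ s in a k..a (k + 1), |c s| ^ 3 := fun k hk => by
    have hlen : a (k + 1) - a k = 1 / n := by simp only [ha]; push_cast; ring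
    calc ∫ s in a k..a (k + 1), (C s - C (nfl n s)) ^ 2 * c s
        = ∫ s in a k..a (k + 1), (∫ u in a k..s, c u) ^ 2 * c s :=
          intervalIntegral.integral_congr_Ioo_of_le (hmono k) (hpiece k hk)
      _ ≤ (∫ s in a k..a (k + 1), |c s|) ^ 3 :=
          integral_sq_primitive_mul_le (hmono k) (hc.mono_set (hsub k hk))
      _ ≤ (1 / (n : ℝ)) ^ 2 * ∫ s in a k..a (k + 1), |c s| ^ 3 :=
          hlen ▸ integral_abs_pow_succ_le (hmono k) 2 (hc.mono_set (hsub k hk))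
            (hc3.mono_set (hsub k hk))
  have hends : a 0 = 0 ∧ a n = 1 := ⟨by simp [ha], div_self hn'.ne'⟩
  have hsum := intervalIntegral.sum_integral_adjacent_intervals hint
  have hsum3 := intervalIntegral.sum_integral_adjacent_intervals
    fun k hk => hc3.mono_set (hsub k hk)
  rw [hends.1, hends.2] at hsum hsum3
  rw [← hsum, ← hsum3, Finset.mul_sum]
  exact Finset.sum_le_sum fun k hk => hbound k (Finset.mem_range.mp hk)

end Partition

/-- The interval integral of a non-integrable function is `0`, so here `C 0 = C 1 = 0`. -/
theorem eqOn_zero_of_not_intervalIntegrable {C c : ℝ → ℝ} (hmono : MonotoneOn C (Icc 0 1))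
    (hCc : ∀ t, C t = ∫ s in (0 : ℝ)..t, c s) (hc : ¬IntervalIntegrable c volume 0 1) :
    EqOn C 0 (Icc 0 1) := fun t ht => by
  have h0 : C 0 = 0 := by rw [hCc, intervalIntegral.integral_same]
  have h1 : C 1 = 0 := by rw [hCc, intervalIntegral.integral_undef hc]
  have := hmono ⟨le_rfl, zero_le_one⟩ ht ht.1
  have := hmono ht ⟨zero_le_one, le_rfl⟩ ht.2
  simp only [Pi.zero_apply]
  linarith

theorem sq_mul_integral_sq_sub_nfl_mul_le {C c : ℝ → ℝ} (hmono : MonotoneOn C (Icc 0 1))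
    (hCc : ∀ t, C t = ∫ s in (0 : ℝ)..t, c s)
    (hc3 : IntervalIntegrable (fun s => |c s| ^ 3) volume 0 1) {n : ℕ} (hn : 0 < n) :
    (n : ℝ) ^ 2 * ∫ s in (0 : ℝ)..1, (C s - C (nfl n s)) ^ 2 * c s ≤
      ∫ s in (0 : ℝ)..1, |c s| ^ 3 := by
  by_cases hc : IntervalIntegrable c volume 0 1
  · have hn' : (n : ℝ) ≠ 0 := Nat.cast_ne_zero.mpr hn.ne'
    calc (n : ℝ) ^ 2 * ∫ s in (0 : ℝ)..1, (C s - C (nfl n s)) ^ 2 * c s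
        ≤ (n : ℝ) ^ 2 * ((1 / (n : ℝ)) ^ 2 * ∫ s in (0 : ℝ)..1, |c s| ^ 3) := by
          gcongr; exact integral_sq_sub_nfl_mul_le hCc hc hc3 hn
      _ = ∫ s in (0 : ℝ)..1, |c s| ^ 3 := by field_simp
  · have hC := eqOn_zero_of_not_intervalIntegrable hmono hCc hc
    have hzero : ∫ s in (0 : ℝ)..1, (C s - C (nfl n s)) ^ 2 * c s = 0 := by
      refine (intervalIntegral.integral_congr (g := fun _ => (0 : ℝ)) fun s hs => ?_).trans
        intervalIntegral.integral_zero
      rw [uIcc_of_le zero_le_one] at hs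
      simp [hC hs, hC (nfl_mem_Icc hs)]
    rw [hzero, mul_zero]
    exact intervalIntegral.integral_nonneg zero_le_one fun s _ => by positivity

theorem stmt_18_general {Ω : Type*} {mΩ : MeasurableSpace Ω} (μ : Measure Ω)
    (ℱ : Filtration ℝ mΩ) (Y C : ℝ → Ω → ℝ) (c : ℝ → Ω → ℝ)
    (hC : IsQuadraticVariation ℱ μ Y C)
    (hCc : ∀ t ω, C t ω = ∫ s in (0 : ℝ)..t, c s ω)
    (hc3 : ∀ᵐ ω ∂μ, IntegrableOn (fun s => |c s ω| ^ 3) (Set.Icc (0 : ℝ) 1)) :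
    ∀ᵐ ω ∂μ, ∃ K : ℝ, ∀ n : ℕ, 1 ≤ n →
      (n : ℝ) ^ 2 * (∫ s in (0 : ℝ)..1, (C s ω - C (nfl n s) ω) ^ 2 * c s ω) ≤ K := by
  obtain ⟨-, hCmono, -, -, -⟩ := hC
  filter_upwards [hc3] with ω hω
  exact ⟨_, fun n hn => sq_mul_integral_sq_sub_nfl_mul_le ((hCmono ω).monotoneOn _) (hCc · ω)
    ((intervalIntegrable_iff_integrableOn_Icc_of_le zero_le_one).mpr hω) hn⟩

/-- Let `Y` be a continuous real local martingale null at zero with `C = [Y,Y]`.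
If `C_t = ∫₀ᵗ c_s ds` with `∫₀¹ |c_s|³ ds < ∞` a.s., then, with
`N₁ⁿ(C) = ∫₀¹ (C_s − C_{n(s)})² dC_s = ∫₀¹ (C_s − C_{n(s)})² c_s ds`, one has
`sup_n n² N₁ⁿ(C) < ∞` almost surely. -/
theorem stmt_18 {Ω : Type*} {mΩ : MeasurableSpace Ω} (μ : Measure Ω) [IsProbabilityMeasure μ]
    (ℱ : Filtration ℝ mΩ) (Y C : ℝ → Ω → ℝ) (c : ℝ → Ω → ℝ)
    (hY : IsContLocMart ℱ μ Y) (hY0 : ∀ ω, Y 0 ω = 0)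
    (hC : IsQuadraticVariation ℱ μ Y C)
    (hCc : ∀ t ω, C t ω = ∫ s in (0 : ℝ)..t, c s ω)
    (hcad : Adapted ℱ (fun t ω => c t ω))
    (hc3 : ∀ᵐ ω ∂μ, IntegrableOn (fun s => |c s ω| ^ 3) (Set.Icc (0 : ℝ) 1)) :
    ∀ᵐ ω ∂μ, ∃ K : ℝ, ∀ n : ℕ, 1 ≤ n →
      (n : ℝ) ^ 2 * (∫ s in (0 : ℝ)..1, (C s ω - C (nfl n s) ω) ^ 2 * c s ω) ≤ K :=
  stmt_18_general μ ℱ Y C c hC hCc hc3
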